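/- Let F be a figure with equilibrium function eq and base vertex w₀, and let h,h'∈H_F. The minimal number of successive allowed flips (upward or downward, at forced components distinct from U_∞) needed to pass from h to h' is Δ(h,h')/4; moreover, in any such minimal sequence, the forced components on which flips are performed are exactly those components U with h(v_U)≠h'(v_U). -/

import Mathlib

open Classical

noncomputable section

abbrev Vtx : Type := ℤ × ℤ
abbrev GArc : Type := Vtx × Vtx

/-- `a` is an arc of the grid graph `Λ⁺`: its endpoints differ by a unit vector. -/
def IsArc (a : GArc) : Prop :=
  (a.2.1 - a.1.1).natAbs + (a.2.2 - a.1.2).natAbs = 1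

/-- reversal of an arc -/
def arev (a : GArc) : GArc := (a.2, a.1)

/-- `+1` if the cell with lower-left corner `c` is black, `-1` if it is white
(checkerboard coloring). -/
def colorSign (c : Vtx) : ℤ := if (c.1 + c.2) % 2 = 0 then 1 else -1

/-- spin of an arc: `+1` if a traveler along the arc has a white cell on its left,
`-1` otherwise. -/
def sp (a : GArc) : ℤ :=
  colorSign a.1 * ((a.2.2 - a.1.2) ^ 2 - (a.2.1 - a.1.1) ^ 2)

/-- the arcs of a path/cycle given by its list of vertices -/
def arcsOf (C : List Vtx) : List GArc := C.zip C.tail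

/-- sum of a function `g` on arcs over all the arcs of `C` (with multiplicity) -/
def sumOn (g : GArc → ℤ) (C : List Vtx) : ℤ := ((arcsOf C).map g).sum

/-- a (closed) cycle of the grid -/
def IsCycle (C : List Vtx) : Prop :=
  2 ≤ C.length ∧ C.head? = C.getLast? ∧ ∀ a ∈ arcsOf C, IsArc a

/-- an elementary cycle: no repeated vertex except the endpoints -/
def IsElemCycle (C : List Vtx) : Prop := IsCycle C ∧ C.dropLast.Nodup

/-- contribution of an arc to the winding number of a cycle around the center of
cell `c` (crossings of the horizontal ray going East from the center of `c`). -/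
def windTerm (c : Vtx) (a : GArc) : ℤ :=
  if a.1.1 = a.2.1 ∧ c.1 < a.1.1 ∧ min a.1.2 a.2.2 = c.2 then a.2.2 - a.1.2 else 0

/-- winding number of the cycle `C` around the center of the cell `c` -/
def wind (C : List Vtx) (c : Vtx) : ℤ := sumOn (windTerm c) C

/-- a cycle is clockwise when its winding number around any cell is nonpositive
(`-1` on enclosed cells, `0` elsewhere) -/
def IsClockwise (C : List Vtx) : Prop := ∀ c : Vtx, wind C c ≤ 0

/-- a cell is enclosed by `C` when the winding number of `C` around it is nonzero -/
def Encloses (C : List Vtx) (c : Vtx) : Prop := wind C c ≠ 0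

/-- number of black cells minus number of white cells enclosed by a clockwise cycle -/
def Dis (C : List Vtx) : ℤ := -∑ᶠ c : Vtx, wind C c * colorSign c

/-- 4-adjacency of cells (shared edge) -/
def adj4 (c c' : Vtx) : Prop := (c'.1 - c.1).natAbs + (c'.2 - c.2).natAbs = 1

/-- 8-adjacency of cells (shared vertex at least) -/
def adj8 (c c' : Vtx) : Prop := c ≠ c' ∧ (c'.1 - c.1).natAbs ≤ 1 ∧ (c'.2 - c.2).natAbs ≤ 1

/-- a figure: a nonempty, finite, 4-connected set of cells such that no vertex has
all its incident edges on the boundary (no diagonal pinch, so no vertex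
duplication is needed). -/
def IsFigure (F : Finset Vtx) : Prop :=
  F.Nonempty ∧
  (∀ c ∈ F, ∀ c' ∈ F, Relation.ReflTransGen (fun x y => x ∈ F ∧ y ∈ F ∧ adj4 x y) c c') ∧
  (∀ x y : ℤ,
    ¬((x - 1, y - 1) ∈ F ∧ (x, y) ∈ F ∧ (x, y - 1) ∉ F ∧ (x - 1, y) ∉ F) ∧
    ¬((x, y - 1) ∈ F ∧ (x - 1, y) ∈ F ∧ (x - 1, y - 1) ∉ F ∧ (x, y) ∉ F))

/-- one of the two cells adjacent to the edge `[a]` -/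
def cellA (a : GArc) : Vtx :=
  if a.1.2 = a.2.2 then (min a.1.1 a.2.1, a.1.2) else (a.1.1, min a.1.2 a.2.2)

/-- the other cell adjacent to the edge `[a]` -/
def cellB (a : GArc) : Vtx :=
  if a.1.2 = a.2.2 then (min a.1.1 a.2.1, a.1.2 - 1) else (a.1.1 - 1, min a.1.2 a.2.2)

/-- arcs of the graph `G_F`: the edge `[a]` is a side of a cell of `F` -/
def ArcF (F : Finset Vtx) (a : GArc) : Prop := IsArc a ∧ (cellA a ∈ F ∨ cellB a ∈ F)

/-- boundary arcs of `F`: exactly one of the two adjacent cells is in `F` -/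
def BoundaryArcF (F : Finset Vtx) (a : GArc) : Prop :=
  IsArc a ∧ ¬(cellA a ∈ F ↔ cellB a ∈ F)

/-- interior arcs of `F`: both adjacent cells are in `F` -/
def InteriorArcF (F : Finset Vtx) (a : GArc) : Prop :=
  IsArc a ∧ cellA a ∈ F ∧ cellB a ∈ F

/-- `v` is a corner of the cell with lower-left corner `c` -/
def isCorner (v c : Vtx) : Prop :=
  (v.1 = c.1 ∨ v.1 = c.1 + 1) ∧ (v.2 = c.2 ∨ v.2 = c.2 + 1)

/-- vertices of `G_F`: the corners of the cells of `F` -/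
def VF (F : Finset Vtx) : Set Vtx := {v | ∃ c ∈ F, isCorner v c}

/-- a cycle of the graph `G_F` -/
def IsCycleF (F : Finset Vtx) (C : List Vtx) : Prop :=
  2 ≤ C.length ∧ C.head? = C.getLast? ∧ ∀ a ∈ arcsOf C, ArcF F a

/-- an elementary cycle of the graph `G_F` -/
def IsElemCycleF (F : Finset Vtx) (C : List Vtx) : Prop :=
  IsCycleF F C ∧ C.dropLast.Nodup

/-- number of black cells of `F` minus number of white cells of `F` enclosed by
the clockwise cycle `C` -/
def DisF (F : Finset Vtx) (C : List Vtx) : ℤ := -∑ c ∈ F, wind C c * colorSign c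

/-- `ef` is skew-symmetric on the arcs of `G_F` -/
def IsSkewOnF (F : Finset Vtx) (ef : GArc → ℤ) : Prop :=
  ∀ a, ArcF F a → ef (arev a) = -ef a

/-- an equilibrium function of the figure `F` -/
def IsEquilibrium (F : Finset Vtx) (ef : GArc → ℤ) : Prop :=
  IsSkewOnF F ef ∧
  ∀ C, IsElemCycleF F C → IsClockwise C → sumOn sp C + sumOn ef C = 4 * DisF F C

/-- the four sides of the cell `c`, as canonically oriented arcs -/
def sides (c : Vtx) : List GArc :=
  [((c.1, c.2), (c.1 + 1, c.2)), ((c.1, c.2 + 1), (c.1 + 1, c.2 + 1)),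
   ((c.1, c.2), (c.1, c.2 + 1)), ((c.1 + 1, c.2), (c.1 + 1, c.2 + 1))]

/-- a domino tiling of `F`, encoded by the symmetric set `D` of the arcs whose
underlying edges are the central axes of its dominoes: every central axis has
both of its adjacent cells in `F` (dominoes are included in `F`), and every cell
of `F` is covered by exactly one domino (exactly one of its sides is a central
axis): no overlap and no gap. -/
def IsTiling (F : Finset Vtx) (D : Set GArc) : Prop :=
  (∀ a ∈ D, arev a ∈ D) ∧
  (∀ a ∈ D, IsArc a ∧ cellA a ∈ F ∧ cellB a ∈ F) ∧
  (∀ c ∈ F, ∃! a, a ∈ sides c ∧ a ∈ D)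

/-- characteristic function of a tiling: `1` on central axes, `0` elsewhere -/
def chi (D : Set GArc) (a : GArc) : ℤ := if a ∈ D then 1 else 0

/-- the height difference function of a tiling -/
def gT (ef : GArc → ℤ) (D : Set GArc) (a : GArc) : ℤ :=
  ef a - sp a + 2 * sp a * (1 - 2 * chi D a)

/-- the function `t`: `eq(a)-sp(a)+2` on interior arcs, `eq(a)+sp(a)` on boundary arcs -/
def tArc (F : Finset Vtx) (ef : GArc → ℤ) (a : GArc) : ℤ :=
  if cellA a ∈ F ∧ cellB a ∈ F then ef a - sp a + 2 else ef a + sp a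

/-- the function `b`: `eq(a)-sp(a)-2` on interior arcs, `eq(a)+sp(a)` on boundary arcs -/
def bArc (F : Finset Vtx) (ef : GArc → ℤ) (a : GArc) : ℤ :=
  if cellA a ∈ F ∧ cellB a ∈ F then ef a - sp a - 2 else ef a + sp a

/-- the 8-connected component of the cell `c` in the complement of `F` -/
def comp8 (F : Finset Vtx) (c : Vtx) : Set Vtx :=
  {c' | Relation.ReflTransGen (fun x y => x ∉ F ∧ y ∉ F ∧ adj8 x y) c c'}

/-- `c` belongs to a hole of `F` (a finite 8-connected component of the complement) -/
def IsHoleCell (F : Finset Vtx) (c : Vtx) : Prop := c ∉ F ∧ (comp8 F c).Finite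

/-- `c` belongs to `H_∞`, the infinite 8-connected component of the complement -/
def IsHinfCell (F : Finset Vtx) (c : Vtx) : Prop := c ∉ F ∧ ¬(comp8 F c).Finite

/-- `w` is a vertex of `V_F` on the boundary of `H_∞` -/
def OnOuterBoundary (F : Finset Vtx) (w : Vtx) : Prop :=
  w ∈ VF F ∧ ∃ c, IsHinfCell F c ∧ isCorner w c

/-- vertices on the boundary of `F` -/
def Vb (F : Finset Vtx) : Set Vtx :=
  {v | (∃ c ∈ F, isCorner v c) ∧ ∃ c, c ∉ F ∧ isCorner v c}

/-- `h` belongs to the class `H_F` of height functions -/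
def InHF (F : Finset Vtx) (ef : GArc → ℤ) (w0 : Vtx) (h : Vtx → ℤ) : Prop :=
  h w0 = 0 ∧ ∀ a, ArcF F a →
    (h a.2 - h a.1 = bArc F ef a ∨ h a.2 - h a.1 = tArc F ef a)

/-- `h` is the height function induced by the tiling `D` (based at `w0`) -/
def IsHeightOf (F : Finset Vtx) (ef : GArc → ℤ) (D : Set GArc) (w0 : Vtx)
    (h : Vtx → ℤ) : Prop :=
  h w0 = 0 ∧ ∀ a, ArcF F a → h a.2 - h a.1 = gT ef D a

/-- a critical cycle: an elementary cycle of `G_F` with `t(C) = 0` -/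
def CriticalCycle (F : Finset Vtx) (ef : GArc → ℤ) (C : List Vtx) : Prop :=
  IsElemCycleF F C ∧ sumOn (tArc F ef) C = 0

/-- a strongly critical cycle: critical, and `sp(a) = 1` on all its interior arcs -/
def StronglyCriticalCycle (F : Finset Vtx) (ef : GArc → ℤ) (C : List Vtx) : Prop :=
  CriticalCycle F ef C ∧ ∀ a ∈ arcsOf C, InteriorArcF F a → sp a = 1

/-- two vertices are critically equivalent when some critical cycle passes
through both -/
def critRel (F : Finset Vtx) (ef : GArc → ℤ) (v v' : Vtx) : Prop :=
  ∃ C, CriticalCycle F ef C ∧ v ∈ C ∧ v' ∈ C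

/-- the forced component of the vertex `v` (class of the equivalence relation
generated by critical equivalence) -/
def fcomp (F : Finset Vtx) (ef : GArc → ℤ) (v : Vtx) : Set Vtx :=
  {v' | v' ∈ VF F ∧ Relation.EqvGen (critRel F ef) v v'}

/-- `S` is a forced component of `F` -/
def IsForcedComponent (F : Finset Vtx) (ef : GArc → ℤ) (S : Set Vtx) : Prop :=
  ∃ v ∈ VF F, S = fcomp F ef v

/-- `a` is an arc of the graph `G_T` of the tiling `D` -/
def GTArc (F : Finset Vtx) (ef : GArc → ℤ) (D : Set GArc) (a : GArc) : Prop :=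
  ArcF F a ∧ gT ef D a = tArc F ef a

/-- there is a directed path in `G_T` from `u` to `v` -/
def GTReach (F : Finset Vtx) (ef : GArc → ℤ) (D : Set GArc) (u v : Vtx) : Prop :=
  Relation.ReflTransGen (fun x y => GTArc F ef D (x, y)) u v

/-- the result of an upward flip on the component `S`: add `4` on `S` -/
def flipUpAt (S : Set Vtx) (h : Vtx → ℤ) : Vtx → ℤ :=
  fun v => h v + S.indicator (fun _ => (4 : ℤ)) v

/-- the result of a downward flip on the component `S`: subtract `4` on `S` -/
def flipDownAt (S : Set Vtx) (h : Vtx → ℤ) : Vtx → ℤ :=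
  fun v => h v - S.indicator (fun _ => (4 : ℤ)) v

/-- `|h(v_S) - h'(v_S)|` for a representative `v_S` of `S` -/
def compDiff (h h' : Vtx → ℤ) (S : Set Vtx) : ℤ :=
  if hS : S.Nonempty then |h hS.some - h' hS.some| else 0

/-- the distance `Δ(h,h') = Σ_U |h(v_U) - h'(v_U)|` over forced components `U` -/
def Delta (F : Finset Vtx) (ef : GArc → ℤ) (h h' : Vtx → ℤ) : ℤ :=
  ∑ᶠ S ∈ {S : Set Vtx | IsForcedComponent F ef S}, compDiff h h' S

/-- a sequence of `n` allowed upward flips at forced components distinct from `U_∞` -/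
def UpFlipSeq (F : Finset Vtx) (ef : GArc → ℤ) (w0 : Vtx) (f : ℕ → Vtx → ℤ)
    (n : ℕ) : Prop :=
  ∀ i < n, ∃ S, IsForcedComponent F ef S ∧ S ≠ fcomp F ef w0 ∧
    InHF F ef w0 (f i) ∧ InHF F ef w0 (f (i + 1)) ∧ f (i + 1) = flipUpAt S (f i)

/-- a sequence of `n` allowed (upward or downward) flips, flipping at step `i`
the forced component `s i` (distinct from `U_∞`) -/
def FlipSeq (F : Finset Vtx) (ef : GArc → ℤ) (w0 : Vtx) (f : ℕ → Vtx → ℤ)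
    (s : ℕ → Set Vtx) (n : ℕ) : Prop :=
  ∀ i < n, IsForcedComponent F ef (s i) ∧ s i ≠ fcomp F ef w0 ∧
    InHF F ef w0 (f i) ∧ InHF F ef w0 (f (i + 1)) ∧
    (f (i + 1) = flipUpAt (s i) (f i) ∨ f (i + 1) = flipDownAt (s i) (f i))

/-- the four arcs of the two horizontal edges through `v` (central axes of the
pair of vertical dominoes covering the 2×2 square centered at `v`) -/
def hPairAxes (v : Vtx) : Set GArc :=
  {((v.1 - 1, v.2), v), (v, (v.1 - 1, v.2)), (v, (v.1 + 1, v.2)), ((v.1 + 1, v.2), v)}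

/-- the four arcs of the two vertical edges through `v` (central axes of the
pair of horizontal dominoes covering the 2×2 square centered at `v`) -/
def vPairAxes (v : Vtx) : Set GArc :=
  {((v.1, v.2 - 1), v), (v, (v.1, v.2 - 1)), (v, (v.1, v.2 + 1)), ((v.1, v.2 + 1), v)}

/-- a local flip: replace the pair of dominoes covering a 2×2 square by the
other pair covering the same square -/
def LocalFlip (D D' : Set GArc) : Prop :=
  ∃ v : Vtx, (hPairAxes v ⊆ D ∧ D' = (D \ hPairAxes v) ∪ vPairAxes v) ∨
             (vPairAxes v ⊆ D ∧ D' = (D \ vPairAxes v) ∪ hPairAxes v)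

/-- a sequence of `n` local flips between tilings of `F` -/
def LocalFlipSeq (F : Finset Vtx) (g : ℕ → Set GArc) (n : ℕ) : Prop :=
  ∀ i < n, IsTiling F (g i) ∧ IsTiling F (g (i + 1)) ∧ LocalFlip (g i) (g (i + 1))

/-- `h` is a maximal element of `(H_F, ≤)` -/
def MaximalInHF (F : Finset Vtx) (ef : GArc → ℤ) (w0 : Vtx) (h : Vtx → ℤ) : Prop :=
  InHF F ef w0 h ∧ ∀ h', InHF F ef w0 h' →
    (∀ v ∈ VF F, h v ≤ h' v) → ∀ v ∈ VF F, h' v = h v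

/-- `h` is a minimal element of `(H_F, ≤)` -/
def MinimalInHF (F : Finset Vtx) (ef : GArc → ℤ) (w0 : Vtx) (h : Vtx → ℤ) : Prop :=
  InHF F ef w0 h ∧ ∀ h', InHF F ef w0 h' →
    (∀ v ∈ VF F, h' v ≤ h v) → ∀ v ∈ VF F, h' v = h v

/-- an elementary cycle of `G_F` enclosing a single cell of `F` -/
def AroundSingleCell (F : Finset Vtx) (C : List Vtx) : Prop :=
  IsElemCycleF F C ∧ ∃ c ∈ F, ∀ c' : Vtx, wind C c' ≠ 0 ↔ c' = c

/-- a cycle of `G_F` following clockwise the boundary of a hole of `F`: it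
winds `-1` around each cell of the hole and `0` around every other cell -/
def IsClockwiseHoleContour (F : Finset Vtx) (C : List Vtx) : Prop :=
  IsElemCycleF F C ∧ ∃ c₀, IsHoleCell F c₀ ∧
    (∀ c ∈ comp8 F c₀, wind C c = -1) ∧ (∀ c ∉ comp8 F c₀, wind C c = 0)

end

/-!
Every height function takes the maximal increment `t` on all arcs of a critical cycle, so two
height functions differ by a constant on each forced component, and by a multiple of `4` since
`G_F` is connected. A flip changes a single term of `Δ` by `±4`, which gives the lower bound; in
a sequence of exactly `Δ / 4` flips every flip brings its component `4` closer to `h'`, so exactly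
the components where `h` and `h'` differ are flipped.

For the upper bound, suppose `h' > h` somewhere and pick, among the vertices maximising `h' - h`,
one that is minimal for reachability along the tight arcs of `h` (those on which `h` increases by
`t`). Critical equivalence is mutual tight reachability, so every arc leaving its forced component
`U` is tight, and interior since boundary edges are critical; hence `h` can be flipped up at `U`.
If instead `h > h'` somewhere, flip `h'` up in the same way and append the reverse flip.
-/

section Geometry

variable {F : Finset Vtx} {a : GArc} {c v : Vtx}

lemma isArc_arev (ha : IsArc a) : IsArc (arev a) := by
  unfold IsArc arev at *; dsimp only; omega

lemma IsArc.fst_ne_snd (ha : IsArc a) : a.1 ≠ a.2 := by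
  unfold IsArc at ha; intro h; rw [h] at ha; omega

lemma IsArc.colorSign_snd (ha : IsArc a) : colorSign a.2 = -colorSign a.1 := by
  unfold IsArc at ha; unfold colorSign; split_ifs <;> omega

lemma cellA_arev (ha : IsArc a) : cellA (arev a) = cellA a := by
  unfold IsArc at ha; unfold cellA arev; dsimp only
  split_ifs <;> simp only [Prod.mk.injEq] <;> omega

lemma cellB_arev (ha : IsArc a) : cellB (arev a) = cellB a := by
  unfold IsArc at ha; unfold cellB arev; dsimp only
  split_ifs <;> simp only [Prod.mk.injEq] <;> omega

lemma sp_arev (ha : IsArc a) : sp (arev a) = -sp a := by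
  unfold sp arev; rw [ha.colorSign_snd]; ring

lemma arcF_arev (ha : ArcF F a) : ArcF F (arev a) :=
  ⟨isArc_arev ha.1, by rw [cellA_arev ha.1, cellB_arev ha.1]; exact ha.2⟩

lemma IsArc.isCorner_fst (ha : IsArc a) : isCorner a.1 (cellA a) ∧ isCorner a.1 (cellB a) := by
  unfold IsArc at ha; unfold isCorner cellA cellB
  split_ifs <;> omega

lemma ArcF.fst_mem_VF (ha : ArcF F a) : a.1 ∈ VF F := by
  rcases ha.2 with h | h
  exacts [⟨_, h, ha.1.isCorner_fst.1⟩, ⟨_, h, ha.1.isCorner_fst.2⟩]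

lemma ArcF.snd_mem_VF (ha : ArcF F a) : a.2 ∈ VF F := (arcF_arev ha).fst_mem_VF

lemma arcF_of_mem_sides (hc : c ∈ F) (ha : a ∈ sides c) : ArcF F a := by
  simp only [sides, List.mem_cons, List.not_mem_nil, or_false] at ha
  rcases ha with rfl | rfl | rfl | rfl <;>
    refine ⟨by unfold IsArc; dsimp only; omega, ?_⟩ <;> simp [cellA, cellB, hc]

lemma VF_finite (F : Finset Vtx) : (VF F).Finite := by
  refine (F.finite_toSet.biUnion fun c _ => Set.finite_Icc c (c + 1)).subset ?_
  rintro v ⟨c, hc, hv⟩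
  refine Set.mem_biUnion hc ⟨?_, ?_⟩ <;> simp only [Prod.le_def, Prod.fst_add, Prod.snd_add,
    Prod.fst_one, Prod.snd_one] <;> unfold isCorner at hv <;> omega

/-- The cell `c` stands here for its lower-left corner. -/
lemma eqvGen_arcF_of_isCorner (hc : c ∈ F) (hv : isCorner v c) :
    Relation.EqvGen (fun x y => ArcF F (x, y)) c v := by
  have side : ∀ a ∈ sides c, Relation.EqvGen (fun x y => ArcF F (x, y)) a.1 a.2 :=
    fun a ha => .rel _ _ (arcF_of_mem_sides hc ha)
  obtain ⟨x, y⟩ := v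
  obtain ⟨rfl | rfl, rfl | rfl⟩ := hv
  · exact .refl _
  · exact side ((c.1, c.2), (c.1, c.2 + 1)) (by simp [sides])
  · exact side ((c.1, c.2), (c.1 + 1, c.2)) (by simp [sides])
  · exact .trans _ _ _ (side ((c.1, c.2), (c.1 + 1, c.2)) (by simp [sides]))
      (side ((c.1 + 1, c.2), (c.1 + 1, c.2 + 1)) (by simp [sides]))

lemma eqvGen_arcF_of_mem (hF : IsFigure F) {c c' : Vtx} (hc : c ∈ F) (hc' : c' ∈ F) :
    Relation.EqvGen (fun x y => ArcF F (x, y)) c c' := by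
  induction hF.2.1 c hc c' hc' with
  | refl => exact .refl _
  | @tail b d _ hbd ih =>
    obtain ⟨hs, ht, hadj⟩ := hbd
    refine .trans _ _ _ (ih hs) ?_
    unfold adj4 at hadj
    by_cases hcor : isCorner d b
    · exact eqvGen_arcF_of_isCorner hs hcor
    · refine .symm _ _ (eqvGen_arcF_of_isCorner ht ?_)
      unfold isCorner at hcor ⊢; omega

lemma eqvGen_arcF_of_mem_VF (hF : IsFigure F) {v' : Vtx} (hv : v ∈ VF F) (hv' : v' ∈ VF F) :
    Relation.EqvGen (fun x y => ArcF F (x, y)) v v' := by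
  obtain ⟨c, hc, hcv⟩ := hv
  obtain ⟨c', hc', hcv'⟩ := hv'
  exact .trans _ _ _ (.symm _ _ (eqvGen_arcF_of_isCorner hc hcv))
    (.trans _ _ _ (eqvGen_arcF_of_mem hF hc hc') (eqvGen_arcF_of_isCorner hc' hcv'))

end Geometry

section Walks

variable {α : Type*} {r : α → α → Prop} {l : List α} {x y : α}

def IsClosedWalk (r : α → α → Prop) (l : List α) : Prop :=
  l.IsChain r ∧ l.head? = l.getLast?

lemma IsClosedWalk.reflTransGen (hl : IsClosedWalk r l) (hx : x ∈ l) (hy : y ∈ l) :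
    Relation.ReflTransGen r x y := by
  have hne : l ≠ [] := List.ne_nil_of_mem hx
  have hcl : l.head hne = l.getLast hne := by
    simpa [List.head?_eq_some_head hne, List.getLast?_eq_some_getLast hne] using hl.2
  have to_last := hl.1.backwards_induction (Relation.ReflTransGen r · (l.getLast hne)) l
    (fun _ _ h h' => .head h h') (fun _ => .refl)
  have from_head := hl.1.induction (Relation.ReflTransGen r (l.head hne) ·) l
    (fun _ _ h h' => .tail h' h) (fun _ => .refl)
  exact (to_last x hx).trans (hcl ▸ from_head y hy)

lemma List.exists_eq_append_cons_append_cons_of_not_nodup :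
    ∀ {l : List α}, ¬ l.Nodup → ∃ u A B C, l = A ++ u :: B ++ u :: C
  | [], h => absurd List.nodup_nil h
  | x :: t, h => by
    by_cases hx : x ∈ t
    · obtain ⟨B, C, rfl⟩ := List.append_of_mem hx
      exact ⟨x, [], B, C, rfl⟩
    · obtain ⟨u, A, B, C, rfl⟩ :=
        exists_eq_append_cons_append_cons_of_not_nodup fun hn => h (List.nodup_cons.2 ⟨hx, hn⟩)
      exact ⟨u, x :: A, B, C, rfl⟩

lemma IsClosedWalk.exists_split (hl : IsClosedWalk r l) (hnd : ¬ l.dropLast.Nodup) :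
    ∃ u W₁ W₂, IsClosedWalk r W₁ ∧ IsClosedWalk r W₂ ∧ W₁.length < l.length ∧
      W₂.length < l.length ∧ u ∈ W₁ ∧ u ∈ W₂ ∧ ∀ x ∈ l, x ∈ W₁ ∨ x ∈ W₂ := by
  obtain ⟨u, A, B, C, hsplit⟩ := List.exists_eq_append_cons_append_cons_of_not_nodup hnd
  have hne : l ≠ [] := by rintro rfl; simp at hsplit
  set w := l.getLast hne
  have hl' : l = A ++ (u :: B ++ [u]) ++ (C ++ [w]) := by
    rw [← List.dropLast_append_getLast hne, hsplit]; simp [w]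
  refine ⟨u, u :: B ++ [u], A ++ u :: (C ++ [w]),
    ⟨hl.1.infix ⟨A, C ++ [w], hl'.symm⟩, by rw [List.getLast?_concat]; rfl⟩,
    ⟨List.isChain_split.2 ⟨hl.1.prefix ⟨B ++ u :: C ++ [w], by simp [hl']⟩,
      hl.1.suffix ⟨A ++ u :: B, by simp [hl']⟩⟩, ?_⟩, ?_, ?_, by simp, by simp, ?_⟩
  · rw [show A ++ u :: (C ++ [w]) = A ++ u :: C ++ [w] by simp, List.getLast?_concat,
      ← List.getLast?_eq_some_getLast hne, ← hl.2, hl']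
    cases A <;> rfl
  · rw [hl']; simp; omega
  · rw [hl']; simp
  · intro x hx
    rw [hl'] at hx
    simp only [List.mem_append, List.mem_cons] at hx ⊢
    tauto

lemma List.IsChain.apply_eq_of_mem {β : Type*} {φ : α → β}
    (hl : l.IsChain (fun x y => φ x = φ y)) (hx : x ∈ l) (hy : y ∈ l) : φ x = φ y := by
  have key := hl.induction (φ · = φ (l.head (List.ne_nil_of_mem hx))) l
    (fun _ _ h h' => h.symm.trans h') (fun _ => rfl)
  rw [key x hx, key y hy]

lemma Finset.exists_reflTransGen_minimal (r : α → α → Prop) (s : Finset α) (hs : s.Nonempty) :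
    ∃ x ∈ s, ∀ z ∈ s, Relation.ReflTransGen r z x → Relation.ReflTransGen r x z := by
  obtain ⟨x, hx, hmin⟩ :=
    s.exists_min_image (fun x => (s.filter (Relation.ReflTransGen r · x)).card) hs
  refine ⟨x, hx, fun z hz hzx => ?_⟩
  have hsub : s.filter (Relation.ReflTransGen r · z) ⊆ s.filter (Relation.ReflTransGen r · x) :=
    fun y hy => by
      rw [Finset.mem_filter] at hy ⊢
      exact ⟨hy.1, hy.2.trans hzx⟩
  have hxx : x ∈ s.filter (Relation.ReflTransGen r · x) := Finset.mem_filter.2 ⟨hx, .refl⟩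
  rw [← Finset.eq_of_subset_of_card_le hsub (hmin z hz), Finset.mem_filter] at hxx
  exact hxx.2

end Walks

section Heights

variable {F : Finset Vtx} {ef : GArc → ℤ} {w0 : Vtx} {f g h : Vtx → ℤ} {a : GArc}
  {C : List Vtx} {v v' : Vtx}

lemma forall_mem_arcsOf_iff_isChain {r : Vtx → Vtx → Prop} :
    ∀ {l : List Vtx}, (∀ a ∈ arcsOf l, r a.1 a.2) ↔ l.IsChain r
  | [] | [_] => by simp [arcsOf]
  | x :: y :: l => by
    rw [show arcsOf (x :: y :: l) = (x, y) :: arcsOf (y :: l) from rfl, List.forall_mem_cons,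
      forall_mem_arcsOf_iff_isChain, List.isChain_cons_cons]

lemma sumOn_sub (f g : GArc → ℤ) (C : List Vtx) :
    sumOn (fun a => f a - g a) C = sumOn f C - sumOn g C := by
  unfold sumOn; induction arcsOf C <;> simp [*]; ring

lemma sumOn_increment_cons (g : Vtx → ℤ) : ∀ (x : Vtx) (l : List Vtx),
    sumOn (fun a => g a.2 - g a.1) (x :: l) = g ((x :: l).getLast (List.cons_ne_nil x l)) - g x
  | x, [] => by simp [sumOn, arcsOf]
  | x, y :: l => by
    rw [show sumOn (fun a => g a.2 - g a.1) (x :: y :: l)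
        = g y - g x + sumOn (fun a => g a.2 - g a.1) (y :: l) from rfl,
      sumOn_increment_cons g y l, List.getLast_cons_cons]
    ring

lemma sumOn_increment_eq_zero (g : Vtx → ℤ) (hcl : C.head? = C.getLast?) :
    sumOn (fun a => g a.2 - g a.1) C = 0 := by
  cases C with
  | nil => rfl
  | cons x l =>
    have hlast : (x :: l).getLast (List.cons_ne_nil x l) = x := by
      rw [List.getLast?_eq_some_getLast (List.cons_ne_nil x l)] at hcl
      simpa using hcl.symm
    rw [sumOn_increment_cons, hlast, sub_self]

lemma tArc_sub_bArc (a : GArc) :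
    tArc F ef a - bArc F ef a = if cellA a ∈ F ∧ cellB a ∈ F then 4 else 0 := by
  unfold tArc bArc; split_ifs <;> ring

lemma bArc_le_tArc (a : GArc) : bArc F ef a ≤ tArc F ef a := by
  have := tArc_sub_bArc (F := F) (ef := ef) a; split_ifs at this <;> omega

lemma tArc_arev (hef : IsSkewOnF F ef) (ha : ArcF F a) :
    tArc F ef (arev a) = -bArc F ef a := by
  unfold tArc bArc
  rw [cellA_arev ha.1, cellB_arev ha.1, hef a ha, sp_arev ha.1]
  split_ifs <;> ring

lemma InHF.sub_le_tArc (hh : InHF F ef w0 h) (ha : ArcF F a) : h a.2 - h a.1 ≤ tArc F ef a := by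
  rcases hh.2 a ha with hb | ht
  · exact hb ▸ bArc_le_tArc a
  · exact ht.le

lemma InHF.congr (hg : InHF F ef w0 g) (hw0 : w0 ∈ VF F) (hfg : Set.EqOn f g (VF F)) :
    InHF F ef w0 f := by
  refine ⟨(hfg hw0).trans hg.1, fun a ha => ?_⟩
  rw [hfg ha.fst_mem_VF, hfg ha.snd_mem_VF]
  exact hg.2 a ha

/-- Along an arc of `G_F`, the increments of two height functions differ by `0` or `±4`. -/
lemma four_dvd_sub_of_eqvGen_arcF (hh : InHF F ef w0 h) (hg : InHF F ef w0 g)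
    (he : Relation.EqvGen (fun x y => ArcF F (x, y)) v v') :
    4 ∣ (h v' - g v') - (h v - g v) := by
  induction he with
  | rel x y hxy =>
    have := tArc_sub_bArc (F := F) (ef := ef) (x, y)
    rcases hh.2 _ hxy with h1 | h1 <;> rcases hg.2 _ hxy with h2 | h2 <;> dsimp only at h1 h2 <;>
      split_ifs at this <;> omega
  | refl => simp
  | symm _ _ _ ih => exact (dvd_neg.2 ih).trans (by ring_nf; rfl)
  | trans _ _ _ _ _ ih₁ ih₂ => exact (dvd_add ih₁ ih₂).trans (by ring_nf; rfl)

lemma four_dvd_sub (hF : IsFigure F) (hw0 : w0 ∈ VF F) (hh : InHF F ef w0 h)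
    (hg : InHF F ef w0 g) (hv : v ∈ VF F) : 4 ∣ h v - g v := by
  simpa [hh.1, hg.1] using four_dvd_sub_of_eqvGen_arcF hh hg (eqvGen_arcF_of_mem_VF hF hw0 hv)

lemma CriticalCycle.arcF (hC : CriticalCycle F ef C) (ha : a ∈ arcsOf C) : ArcF F a :=
  hC.1.1.2.2 a ha

lemma CriticalCycle.head?_eq_getLast? (hC : CriticalCycle F ef C) : C.head? = C.getLast? :=
  hC.1.1.2.1

/-- Increments are at most `t` and sum to `0 = t(C)` around the cycle. -/
lemma CriticalCycle.sub_eq_tArc (hh : InHF F ef w0 h) (hC : CriticalCycle F ef C)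
    (ha : a ∈ arcsOf C) : h a.2 - h a.1 = tArc F ef a := by
  have hnn : ∀ x ∈ (arcsOf C).map (fun a => tArc F ef a - (h a.2 - h a.1)), 0 ≤ x := by
    simp only [List.mem_map]
    rintro _ ⟨b, hb, rfl⟩
    linarith [hh.sub_le_tArc (hC.arcF hb)]
  have hsum : sumOn (fun a => tArc F ef a - (h a.2 - h a.1)) C = 0 := by
    rw [sumOn_sub, hC.2, sumOn_increment_eq_zero h hC.head?_eq_getLast?, sub_zero]
  linarith [List.all_zero_of_le_zero_le_of_sum_eq_zero hnn hsum (List.mem_map_of_mem ha)]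

lemma sub_eq_of_eqvGen_critRel (hh : InHF F ef w0 h) (hg : InHF F ef w0 g)
    (he : Relation.EqvGen (critRel F ef) v v') : h v - g v = h v' - g v' := by
  induction he with
  | rel x y hxy =>
    obtain ⟨C, hC, hx, hy⟩ := hxy
    refine List.IsChain.apply_eq_of_mem (φ := fun z => h z - g z)
      (forall_mem_arcsOf_iff_isChain.1 fun a ha => ?_) hx hy
    linarith [hC.sub_eq_tArc hh ha, hC.sub_eq_tArc hg ha]
  | refl => rfl
  | symm _ _ _ ih => exact ih.symm
  | trans _ _ _ _ _ ih₁ ih₂ => exact ih₁.trans ih₂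

lemma criticalCycle_of_boundary (hef : IsSkewOnF F ef) (ha : ArcF F a)
    (hb : ¬(cellA a ∈ F ∧ cellB a ∈ F)) : CriticalCycle F ef [a.1, a.2, a.1] := by
  refine ⟨⟨⟨by simp, rfl, ?_⟩, by simp [ha.1.fst_ne_snd]⟩, ?_⟩
  · exact (forall_mem_arcsOf_iff_isChain (r := fun x y => ArcF F (x, y))).2
      (.cons_cons ha (.cons_cons (arcF_arev ha) (.singleton _)))
  · show tArc F ef a + (tArc F ef (arev a) + 0) = 0
    rw [tArc_arev hef ha]
    unfold tArc bArc
    simp [hb]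

end Heights

section ForcedComponents

variable {F : Finset Vtx} {ef : GArc → ℤ} {w0 : Vtx} {f f' g h : Vtx → ℤ} {S U : Set Vtx}
  {u v v' : Vtx}

lemma mem_fcomp_self (hv : v ∈ VF F) : v ∈ fcomp F ef v := ⟨hv, .refl v⟩

lemma isForcedComponent_fcomp (hv : v ∈ VF F) : IsForcedComponent F ef (fcomp F ef v) :=
  ⟨v, hv, rfl⟩

lemma fcomp_eq_of_eqvGen (he : Relation.EqvGen (critRel F ef) v v') :
    fcomp F ef v = fcomp F ef v' := by
  ext x
  exact and_congr_right fun _ =>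
    ⟨fun hx => .trans _ _ _ (.symm _ _ he) hx, fun hx => .trans _ _ _ he hx⟩

lemma IsForcedComponent.eq_fcomp (hS : IsForcedComponent F ef S) (hu : u ∈ S) :
    S = fcomp F ef u := by
  obtain ⟨v, -, rfl⟩ := hS
  exact fcomp_eq_of_eqvGen hu.2

lemma IsForcedComponent.eq_of_mem (hS : IsForcedComponent F ef S)
    (hU : IsForcedComponent F ef U) (huS : u ∈ S) (huU : u ∈ U) : S = U :=
  (hS.eq_fcomp huS).trans (hU.eq_fcomp huU).symm

lemma IsForcedComponent.subset_VF (hS : IsForcedComponent F ef S) : S ⊆ VF F := by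
  obtain ⟨v, -, rfl⟩ := hS
  exact fun _ hx => hx.1

lemma IsForcedComponent.nonempty (hS : IsForcedComponent F ef S) : S.Nonempty := by
  obtain ⟨v, hv, rfl⟩ := hS
  exact ⟨v, mem_fcomp_self hv⟩

lemma IsForcedComponent.sub_eq (hS : IsForcedComponent F ef S) (hh : InHF F ef w0 h)
    (hg : InHF F ef w0 g) (hu : u ∈ S) (hv : v ∈ S) : h u - g u = h v - g v := by
  obtain ⟨x, -, rfl⟩ := hS
  exact (sub_eq_of_eqvGen_critRel hh hg hu.2).symm.trans (sub_eq_of_eqvGen_critRel hh hg hv.2)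

/-- Boundary edges never leave a forced component: their two-arc cycle is critical. -/
lemma IsForcedComponent.interior_of_mem_of_notMem (hef : IsSkewOnF F ef)
    (hU : IsForcedComponent F ef U) {a : GArc} (ha : ArcF F a) (h1 : a.1 ∈ U) (h2 : a.2 ∉ U) :
    cellA a ∈ F ∧ cellB a ∈ F := by
  by_contra hb
  rw [hU.eq_fcomp h1] at h2
  exact h2 ⟨ha.snd_mem_VF, .rel _ _ ⟨_, criticalCycle_of_boundary hef ha hb, by simp, by simp⟩⟩

lemma setOf_isForcedComponent_finite (F : Finset Vtx) (ef : GArc → ℤ) :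
    {S | IsForcedComponent F ef S}.Finite :=
  (VF_finite F).finite_subsets.subset fun _ hS => hS.subset_VF

end ForcedComponents

section Distance

variable {F : Finset Vtx} {ef : GArc → ℤ} {w0 : Vtx} {f f' g : Vtx → ℤ} {S U : Set Vtx} {u : Vtx}

lemma compDiff_nonneg : 0 ≤ compDiff f g S := by
  unfold compDiff; split_ifs <;> positivity

lemma compDiff_eq_abs (hc : ∀ x ∈ S, f x - g x = f u - g u) (hu : u ∈ S) :
    compDiff f g S = |f u - g u| := by
  have hS : S.Nonempty := ⟨u, hu⟩
  rw [compDiff, dif_pos hS, hc _ hS.some_mem]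

lemma compDiff_congr (hff' : ∀ x ∈ S, f' x = f x) : compDiff f' g S = compDiff f g S := by
  unfold compDiff
  split_ifs with hS
  · rw [hff' _ hS.some_mem]
  · rfl

lemma IsForcedComponent.compDiff_eq (hS : IsForcedComponent F ef S) (hf : InHF F ef w0 f)
    (hg : InHF F ef w0 g) (hu : u ∈ S) : compDiff f g S = |f u - g u| :=
  compDiff_eq_abs (fun _ hx => hS.sub_eq hf hg hx hu) hu

lemma delta_eq_sum :
    Delta F ef f g = ∑ S ∈ (setOf_isForcedComponent_finite F ef).toFinset, compDiff f g S :=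
  finsum_mem_eq_finite_toFinset_sum _ _

lemma delta_nonneg : 0 ≤ Delta F ef f g := by
  rw [delta_eq_sum]
  exact Finset.sum_nonneg fun _ _ => compDiff_nonneg

lemma delta_comm : Delta F ef f g = Delta F ef g f := by
  simp only [delta_eq_sum, compDiff, abs_sub_comm]

lemma delta_eq_zero_of_eqOn (hfg : Set.EqOn f g (VF F)) : Delta F ef f g = 0 := by
  rw [delta_eq_sum]
  refine Finset.sum_eq_zero fun S hS => ?_
  unfold compDiff
  split_ifs with hne
  · rw [hfg (((Set.Finite.mem_toFinset _).1 hS).subset_VF hne.some_mem), sub_self, abs_zero]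
  · rfl

lemma eqOn_of_delta_eq_zero (hf : InHF F ef w0 f) (hg : InHF F ef w0 g)
    (h0 : Delta F ef f g = 0) : Set.EqOn f g (VF F) := by
  intro v hv
  rw [delta_eq_sum, Finset.sum_eq_zero_iff_of_nonneg fun _ _ => compDiff_nonneg] at h0
  have := h0 _ ((Set.Finite.mem_toFinset _).2 (isForcedComponent_fcomp hv))
  rwa [(isForcedComponent_fcomp hv).compDiff_eq hf hg (mem_fcomp_self hv), abs_eq_zero,
    sub_eq_zero] at this

lemma four_dvd_delta (hF : IsFigure F) (hw0 : w0 ∈ VF F) (hf : InHF F ef w0 f)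
    (hg : InHF F ef w0 g) : 4 ∣ Delta F ef f g := by
  rw [delta_eq_sum]
  refine Finset.dvd_sum fun S hS => ?_
  have hS := (Set.Finite.mem_toFinset _).1 hS
  obtain ⟨u, hu⟩ := hS.nonempty
  rw [hS.compDiff_eq hf hg hu, dvd_abs]
  exact four_dvd_sub hF hw0 hf hg (hS.subset_VF hu)

lemma delta_eq_of_shift (hU : IsForcedComponent F ef U) (hf : InHF F ef w0 f)
    (hg : InHF F ef w0 g) {d : ℤ} (hoff : ∀ v ∉ U, f' v = f v) (hon : ∀ v ∈ U, f' v = f v + d)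
    (hu : u ∈ U) : Delta F ef f' g = Delta F ef f g + (|f u + d - g u| - |f u - g u|) := by
  have hUmem : U ∈ (setOf_isForcedComponent_finite F ef).toFinset :=
    (Set.Finite.mem_toFinset _).2 hU
  have hrest : ∀ S ∈ (setOf_isForcedComponent_finite F ef).toFinset.erase U,
      compDiff f' g S = compDiff f g S := fun S hS => compDiff_congr fun x hx =>
    hoff x fun hxU => Finset.ne_of_mem_erase hS
      (((Set.Finite.mem_toFinset _).1 (Finset.mem_of_mem_erase hS)).eq_of_mem hU hx hxU)
  have hU' : compDiff f' g U = |f u + d - g u| := by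
    rw [compDiff_eq_abs (fun x hx => ?_) hu, hon u hu]
    rw [hon x hx, hon u hu]
    linarith [hU.sub_eq hf hg hx hu]
  rw [delta_eq_sum, delta_eq_sum, ← Finset.add_sum_erase _ _ hUmem,
    ← Finset.add_sum_erase _ _ hUmem, Finset.sum_congr rfl hrest, hU', hU.compDiff_eq hf hg hu]
  ring

end Distance

section TightArcs

variable {F : Finset Vtx} {ef : GArc → ℤ} {w0 : Vtx} {g h : Vtx → ℤ} {x y : Vtx}

def TightArc (F : Finset Vtx) (ef : GArc → ℤ) (h : Vtx → ℤ) (x y : Vtx) : Prop :=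
  ArcF F (x, y) ∧ h y - h x = tArc F ef (x, y)

lemma sub_le_of_tightArc (hg : InHF F ef w0 g) (hT : TightArc F ef h x y) :
    g y - h y ≤ g x - h x := by
  have := hg.sub_le_tArc hT.1
  dsimp only at this
  linarith [hT.2]

lemma tightArc_swap (hef : IsSkewOnF F ef) (hh : InHF F ef w0 h) (ha : ArcF F (x, y))
    (hne : h y - h x ≠ tArc F ef (x, y)) : TightArc F ef h y x := by
  have hb : h y - h x = bArc F ef (x, y) := (hh.2 _ ha).resolve_right hne
  have ht : tArc F ef (y, x) = -bArc F ef (x, y) := tArc_arev hef ha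
  exact ⟨arcF_arev ha, by linarith⟩

lemma criticalCycle_of_isClosedWalk {L : List Vtx} (hL : IsClosedWalk (TightArc F ef h) L)
    (hlen : 2 ≤ L.length) (hnd : L.dropLast.Nodup) : CriticalCycle F ef L := by
  have harcs := (forall_mem_arcsOf_iff_isChain (r := TightArc F ef h)).2 hL.1
  refine ⟨⟨⟨hlen, hL.2, fun a ha => (harcs a ha).1⟩, hnd⟩, ?_⟩
  rw [← sumOn_increment_eq_zero h hL.2]
  exact congrArg List.sum (List.map_congr_left fun a ha => (harcs a ha).2.symm)

/-- Split the walk at a repeated vertex until it is elementary: an elementary closed walk of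
tight arcs is a critical cycle. -/
lemma eqvGen_of_isClosedWalk {L : List Vtx} (hL : IsClosedWalk (TightArc F ef h) L)
    (hx : x ∈ L) (hy : y ∈ L) : Relation.EqvGen (critRel F ef) x y := by
  induction hn : L.length using Nat.strong_induction_on generalizing L x y with
  | _ n ih =>
  by_cases hnd : L.dropLast.Nodup
  · by_cases hlen : 2 ≤ L.length
    · exact .rel _ _ ⟨L, criticalCycle_of_isClosedWalk hL hlen hnd, hx, hy⟩
    · obtain ⟨z, rfl⟩ : ∃ z, L = [z] :=
        List.length_eq_one_iff.1 (by have := List.length_pos_of_mem hx; omega)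
      rw [List.mem_singleton] at hx hy
      exact hx ▸ hy ▸ .refl _
  · obtain ⟨u, W₁, W₂, hW₁, hW₂, hl₁, hl₂, hu₁, hu₂, hcover⟩ := hL.exists_split hnd
    have to_u : ∀ z ∈ L, Relation.EqvGen (critRel F ef) z u := fun z hz =>
      (hcover z hz).elim (fun hz => ih _ (hn ▸ hl₁) hW₁ hz hu₁ rfl)
        (fun hz => ih _ (hn ▸ hl₂) hW₂ hz hu₂ rfl)
    exact .trans _ _ _ (to_u x hx) (.symm _ _ (to_u y hy))

lemma reflTransGen_tightArc_of_eqvGen (hh : InHF F ef w0 h)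
    (he : Relation.EqvGen (critRel F ef) x y) : Relation.ReflTransGen (TightArc F ef h) x y := by
  let Mutual (a b : Vtx) : Prop :=
    Relation.ReflTransGen (TightArc F ef h) a b ∧ Relation.ReflTransGen (TightArc F ef h) b a
  have hequiv : Equivalence Mutual :=
    ⟨fun _ => ⟨.refl, .refl⟩, fun h => ⟨h.2, h.1⟩,
      fun h₁ h₂ => ⟨h₁.1.trans h₂.1, h₂.2.trans h₁.2⟩⟩
  have hcrit : critRel F ef ≤ Mutual := by
    rintro a b ⟨C, hC, ha, hb⟩
    have hW : IsClosedWalk (TightArc F ef h) C :=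
      ⟨(forall_mem_arcsOf_iff_isChain (r := TightArc F ef h)).1 fun c hc =>
        ⟨hC.arcF hc, hC.sub_eq_tArc hh hc⟩, hC.head?_eq_getLast?⟩
    exact ⟨hW.reflTransGen ha hb, hW.reflTransGen hb ha⟩
  exact (hequiv.eqvGen_iff.1 (Relation.EqvGen.mono hcrit _ _ he)).1

lemma eqvGen_of_reflTransGen_tightArc (hxy : Relation.ReflTransGen (TightArc F ef h) x y)
    (hyx : Relation.ReflTransGen (TightArc F ef h) y x) : Relation.EqvGen (critRel F ef) x y := by
  obtain ⟨l₁, hc₁, hl₁⟩ := List.exists_isChain_cons_of_relationReflTransGen hxy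
  obtain ⟨l₂, hc₂, hl₂⟩ := List.exists_isChain_cons_of_relationReflTransGen hyx
  have hlast₁ : (x :: l₁).getLast? = some y := by
    rw [List.getLast?_eq_some_getLast (List.cons_ne_nil _ _), hl₁]
  have hlast₂ : (y :: l₂).getLast? = some x := by
    rw [List.getLast?_eq_some_getLast (List.cons_ne_nil _ _), hl₂]
  have hW : IsClosedWalk (TightArc F ef h) (x :: l₁ ++ l₂) := by
    refine ⟨hc₁.append hc₂.tail fun a ha b hb => ?_, ?_⟩
    · rw [hlast₁, Option.mem_some_iff] at ha
      exact ha ▸ hc₂.rel_head? hb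
    · cases l₂ with
      | nil => simp_all
      | cons z l₂ =>
        rw [List.getLast?_append, show (z :: l₂).getLast? = some x by simpa using hlast₂]
        rfl
  exact eqvGen_of_isClosedWalk hW (by simp) (List.mem_append_left _ (hl₁ ▸ List.getLast_mem _))

end TightArcs

section Flips

variable {F : Finset Vtx} {ef : GArc → ℤ} {w0 : Vtx} {f f' g h : Vtx → ℤ} {S U : Set Vtx}
  {u v x y : Vtx}

lemma flipUpAt_of_mem (hv : v ∈ U) : flipUpAt U h v = h v + 4 := by simp [flipUpAt, hv]

lemma flipUpAt_of_notMem (hv : v ∉ U) : flipUpAt U h v = h v := by simp [flipUpAt, hv]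

lemma flipDownAt_of_mem (hv : v ∈ U) : flipDownAt U h v = h v - 4 := by simp [flipDownAt, hv]

lemma flipDownAt_of_notMem (hv : v ∉ U) : flipDownAt U h v = h v := by simp [flipDownAt, hv]

lemma flipDownAt_flipUpAt : flipDownAt U (flipUpAt U h) = h := by
  funext v; simp [flipUpAt, flipDownAt]

lemma inHF_flipUpAt (hef : IsSkewOnF F ef) (hh : InHF F ef w0 h) (hU : IsForcedComponent F ef U)
    (hw0 : w0 ∉ U) (hleave : ∀ x y, ArcF F (x, y) → x ∈ U → y ∉ U → TightArc F ef h x y) :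
    InHF F ef w0 (flipUpAt U h) := by
  refine ⟨by rw [flipUpAt_of_notMem hw0, hh.1], fun a ha => ?_⟩
  have e := tArc_sub_bArc (F := F) (ef := ef) a
  by_cases h1 : a.1 ∈ U <;> by_cases h2 : a.2 ∈ U
  · rw [flipUpAt_of_mem h1, flipUpAt_of_mem h2, add_sub_add_right_eq_sub]
    exact hh.2 a ha
  · rw [if_pos (hU.interior_of_mem_of_notMem hef ha h1 h2)] at e
    have ht : h a.2 - h a.1 = tArc F ef a := (hleave a.1 a.2 ha h1 h2).2
    rw [flipUpAt_of_mem h1, flipUpAt_of_notMem h2]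
    left; linarith
  · have hint := hU.interior_of_mem_of_notMem hef (arcF_arev ha) h2 h1
    rw [cellA_arev ha.1, cellB_arev ha.1] at hint
    rw [if_pos hint] at e
    have ht : h a.1 - h a.2 = -bArc F ef a :=
      (hleave a.2 a.1 (arcF_arev ha) h2 h1).2.trans (tArc_arev hef ha)
    rw [flipUpAt_of_notMem h1, flipUpAt_of_mem h2]
    right; linarith
  · rw [flipUpAt_of_notMem h1, flipUpAt_of_notMem h2]
    exact hh.2 a ha

structure IsFlip (F : Finset Vtx) (ef : GArc → ℤ) (w0 : Vtx) (S : Set Vtx) (f f' : Vtx → ℤ) :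
    Prop where
  isForcedComponent : IsForcedComponent F ef S
  ne_fcomp : S ≠ fcomp F ef w0
  inHF_left : InHF F ef w0 f
  inHF_right : InHF F ef w0 f'
  eq_flipUpAt_or_eq_flipDownAt : f' = flipUpAt S f ∨ f' = flipDownAt S f

lemma isFlip_iff : IsFlip F ef w0 S f f' ↔ IsForcedComponent F ef S ∧ S ≠ fcomp F ef w0 ∧
    InHF F ef w0 f ∧ InHF F ef w0 f' ∧ (f' = flipUpAt S f ∨ f' = flipDownAt S f) :=
  ⟨fun h => ⟨h.1, h.2, h.3, h.4, h.5⟩, fun ⟨h₁, h₂, h₃, h₄, h₅⟩ => ⟨h₁, h₂, h₃, h₄, h₅⟩⟩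

lemma IsFlip.shift (hS : IsFlip F ef w0 S f f') :
    ∃ d : ℤ, |d| = 4 ∧ (∀ v ∉ S, f' v = f v) ∧ ∀ v ∈ S, f' v = f v + d := by
  rcases hS.eq_flipUpAt_or_eq_flipDownAt with rfl | rfl
  · exact ⟨4, by norm_num, fun _ => flipUpAt_of_notMem, fun _ => flipUpAt_of_mem⟩
  · exact ⟨-4, by norm_num, fun _ => flipDownAt_of_notMem,
      fun _ hv => (flipDownAt_of_mem hv).trans (sub_eq_add_neg _ _)⟩

lemma IsFlip.eq_of_notMem (hS : IsFlip F ef w0 S f f') (hv : v ∉ S) : f' v = f v :=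
  hS.shift.choose_spec.2.1 v hv

lemma IsFlip.delta_eq (hS : IsFlip F ef w0 S f f') (hg : InHF F ef w0 g) (hu : u ∈ S) :
    Delta F ef f' g = Delta F ef f g + (|f' u - g u| - |f u - g u|) := by
  obtain ⟨d, -, hoff, hon⟩ := hS.shift
  rw [delta_eq_of_shift hS.isForcedComponent hS.inHF_left hg hoff hon hu, hon u hu]

lemma IsFlip.delta_le (hS : IsFlip F ef w0 S f f') (hg : InHF F ef w0 g) :
    Delta F ef f g ≤ Delta F ef f' g + 4 := by
  obtain ⟨u, hu⟩ := hS.isForcedComponent.nonempty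
  obtain ⟨d, hd, -, hon⟩ := hS.shift
  have := abs_sub_abs_le_abs_sub (f u - g u) (f' u - g u)
  rw [hon u hu, show f u - g u - (f u + d - g u) = -d by ring, abs_neg, hd] at this
  rw [hS.delta_eq hg hu, hon u hu]
  linarith

lemma IsFlip.abs_sub_add_four (hS : IsFlip F ef w0 S f f') (hg : InHF F ef w0 g)
    (htight : Delta F ef f g = Delta F ef f' g + 4) (hu : u ∈ S) :
    |f' u - g u| + 4 = |f u - g u| := by
  linarith [hS.delta_eq hg hu]

lemma IsFlip.abs_sub_le (hS : IsFlip F ef w0 S f f') (hg : InHF F ef w0 g)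
    (htight : Delta F ef f g = Delta F ef f' g + 4) (v : Vtx) : |f' v - g v| ≤ |f v - g v| := by
  by_cases hv : v ∈ S
  · linarith [hS.abs_sub_add_four hg htight hv]
  · rw [hS.eq_of_notMem hv]

/-- Among the vertices maximising `g - h`, take `x₀` minimal for tight reachability: an arc of
`G_F` leaving its forced component on which `h` is not tight would, reversed, be a tight arc from
a vertex that also maximises `g - h` and reaches `x₀` without being reached from it. -/
lemma tightArc_of_leaving_fcomp {g : Vtx → ℤ} {x₀ : Vtx} (hef : IsSkewOnF F ef)
    (hh : InHF F ef w0 h) (hg : InHF F ef w0 g) (hx₀ : x₀ ∈ VF F)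
    (hmax : ∀ v ∈ VF F, g v - h v ≤ g x₀ - h x₀)
    (hsrc : ∀ z ∈ VF F, g z - h z = g x₀ - h x₀ → Relation.ReflTransGen (TightArc F ef h) z x₀ →
      Relation.ReflTransGen (TightArc F ef h) x₀ z)
    (ha : ArcF F (x, y)) (hx : x ∈ fcomp F ef x₀) (hy : y ∉ fcomp F ef x₀) :
    TightArc F ef h x y := by
  refine ⟨ha, by_contra fun hne => hy ⟨ha.snd_mem_VF, ?_⟩⟩
  have hyx := tightArc_swap hef hh ha hne
  have hxM : g x - h x = g x₀ - h x₀ :=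
    (isForcedComponent_fcomp hx₀).sub_eq hg hh hx (mem_fcomp_self hx₀)
  have hyM : g y - h y = g x₀ - h x₀ :=
    le_antisymm (hmax y ha.snd_mem_VF) (hxM ▸ sub_le_of_tightArc hg hyx)
  have hyx₀ : Relation.ReflTransGen (TightArc F ef h) y x₀ :=
    .head hyx (reflTransGen_tightArc_of_eqvGen hh (.symm _ _ hx.2))
  exact eqvGen_of_reflTransGen_tightArc (hsrc y ha.snd_mem_VF hyM hyx₀) hyx₀

lemma exists_isFlip_flipUpAt (hef : IsSkewOnF F ef) (hw0 : w0 ∈ VF F) (hh : InHF F ef w0 h)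
    (hg : InHF F ef w0 g) (hlt : ∃ v ∈ VF F, h v < g v) :
    ∃ U, IsFlip F ef w0 U h (flipUpAt U h) ∧ ∀ u ∈ U, h u < g u := by
  obtain ⟨v₀, hv₀, hlt⟩ := hlt
  have hVF : ∀ v, v ∈ (VF_finite F).toFinset ↔ v ∈ VF F := fun v => Set.Finite.mem_toFinset _
  obtain ⟨m, hm, hmax⟩ := (VF_finite F).toFinset.exists_max_image (fun v => g v - h v)
    ⟨v₀, (hVF v₀).2 hv₀⟩
  obtain ⟨x₀, hx₀, hsrc⟩ := Finset.exists_reflTransGen_minimal (TightArc F ef h)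
    ((VF_finite F).toFinset.filter fun v => g v - h v = g m - h m)
    ⟨m, Finset.mem_filter.2 ⟨hm, rfl⟩⟩
  simp only [Finset.mem_filter, hVF] at hx₀ hsrc hmax
  have hU := isForcedComponent_fcomp (ef := ef) hx₀.1
  have hUlt : ∀ u ∈ fcomp F ef x₀, h u < g u := fun u hu => by
    linarith [hU.sub_eq hg hh hu (mem_fcomp_self hx₀.1), hmax v₀ hv₀, hx₀.2]
  have hw0U : w0 ∉ fcomp F ef x₀ := fun hw => by linarith [hUlt w0 hw, hh.1, hg.1]
  refine ⟨_, ⟨hU, fun he => hw0U (he ▸ mem_fcomp_self hw0), hh, ?_, Or.inl rfl⟩, hUlt⟩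
  exact inHF_flipUpAt hef hh hU hw0U fun x y ha hx hy => tightArc_of_leaving_fcomp hef hh hg hx₀.1
    (fun v hv => (hmax v hv).trans hx₀.2.ge) (fun z hz hzM => hsrc z ⟨hz, hzM.trans hx₀.2⟩) ha hx hy

lemma IsFlip.delta_flipUpAt (hF : IsFigure F) (hw0 : w0 ∈ VF F)
    (hS : IsFlip F ef w0 S h (flipUpAt S h)) (hg : InHF F ef w0 g) (hlt : ∀ u ∈ S, h u < g u) :
    Delta F ef (flipUpAt S h) g + 4 = Delta F ef h g := by
  obtain ⟨u, hu⟩ := hS.isForcedComponent.nonempty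
  obtain ⟨k, hk⟩ := four_dvd_sub hF hw0 hg hS.inHF_left (hS.isForcedComponent.subset_VF hu)
  have h4 : 4 ≤ g u - h u := by have := hlt u hu; omega
  rw [hS.delta_eq hg hu, flipUpAt_of_mem hu, abs_of_nonpos (by linarith),
    abs_of_nonpos (by linarith)]
  ring

end Flips

section FlipSequences

variable {F : Finset Vtx} {ef : GArc → ℤ} {w0 : Vtx} {f g h : Vtx → ℤ} {S : Set Vtx}
  {φ : ℕ → Vtx → ℤ} {s : ℕ → Set Vtx} {n : ℕ}

def FlipReach (F : Finset Vtx) (ef : GArc → ℤ) (w0 : Vtx) (n : ℕ) (f g : Vtx → ℤ) : Prop :=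
  ∃ (φ : ℕ → Vtx → ℤ) (s : ℕ → Set Vtx),
    φ 0 = f ∧ (∀ v ∈ VF F, φ n v = g v) ∧ FlipSeq F ef w0 φ s n

lemma FlipSeq.isFlip (hseq : FlipSeq F ef w0 φ s n) {i : ℕ} (hi : i < n) :
    IsFlip F ef w0 (s i) (φ i) (φ (i + 1)) :=
  isFlip_iff.2 (hseq i hi)

lemma flipReach_zero (hfg : Set.EqOn f g (VF F)) : FlipReach F ef w0 0 f g :=
  ⟨fun _ => f, fun _ => ∅, rfl, hfg, fun _ hi => absurd hi (Nat.not_lt_zero _)⟩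

lemma FlipReach.cons {f₁ : Vtx → ℤ} (hS : IsFlip F ef w0 S f f₁) (hr : FlipReach F ef w0 n f₁ g) :
    FlipReach F ef w0 (n + 1) f g := by
  obtain ⟨φ, s, h0, hn, hseq⟩ := hr
  refine ⟨fun i => Nat.casesOn i f φ, fun i => Nat.casesOn i S s, rfl, hn, fun i hi => ?_⟩
  cases i with
  | zero => exact isFlip_iff.1 (show IsFlip F ef w0 S f (φ 0) from h0 ▸ hS)
  | succ i => exact hseq i (by omega)

lemma FlipReach.concat_flipDownAt (hw0 : w0 ∈ VF F) (hr : FlipReach F ef w0 n f (flipUpAt S g))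
    (hS : IsFlip F ef w0 S g (flipUpAt S g)) : FlipReach F ef w0 (n + 1) f g := by
  obtain ⟨φ, s, h0, hn, hseq⟩ := hr
  have hlast : Set.EqOn (flipDownAt S (φ n)) g (VF F) := fun v hv => by
    rw [← congrFun (flipDownAt_flipUpAt (U := S) (h := g)) v]
    simp [flipDownAt, hn v hv]
  refine ⟨fun i => if i = n + 1 then flipDownAt S (φ n) else φ i,
    fun i => if i = n then S else s i, by simpa using h0, fun v hv => by simpa using hlast hv,
    fun i hi => ?_⟩
  refine isFlip_iff.1 (?_ : IsFlip F ef w0 (if i = n then S else s i)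
    (if i = n + 1 then _ else φ i) (if i + 1 = n + 1 then _ else φ (i + 1)))
  rcases Nat.lt_succ_iff_lt_or_eq.1 hi with hi | rfl
  · rw [if_neg hi.ne, if_neg (by omega), if_neg (by omega)]
    exact hseq.isFlip hi
  · rw [if_pos rfl, if_neg (by omega), if_pos rfl]
    exact ⟨hS.isForcedComponent, hS.ne_fcomp, hS.inHF_right.congr hw0 hn,
      hS.inHF_left.congr hw0 hlast, Or.inr rfl⟩

lemma flipReach_of_delta_eq (hF : IsFigure F) (hef : IsSkewOnF F ef) (hw0 : w0 ∈ VF F) :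
    ∀ {k : ℕ} {f g : Vtx → ℤ}, InHF F ef w0 f → InHF F ef w0 g →
      Delta F ef f g = 4 * k → FlipReach F ef w0 k f g
  | 0, f, g, hf, hg, hd => flipReach_zero (eqOn_of_delta_eq_zero hf hg (by simpa using hd))
  | k + 1, f, g, hf, hg, hd => by
    push_cast at hd
    by_cases hlt : ∃ v ∈ VF F, f v < g v
    · obtain ⟨U, hU, hUlt⟩ := exists_isFlip_flipUpAt hef hw0 hf hg hlt
      refine .cons hU (flipReach_of_delta_eq hF hef hw0 hU.inHF_right hg ?_)
      linarith [hU.delta_flipUpAt hF hw0 hg hUlt]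
    · have hgt : ∃ v ∈ VF F, g v < f v := by
        by_contra! hge
        have := delta_eq_zero_of_eqOn (ef := ef) fun v hv =>
          le_antisymm (hge v hv) (not_lt.1 fun h => hlt ⟨v, hv, h⟩)
        linarith
      obtain ⟨U, hU, hUlt⟩ := exists_isFlip_flipUpAt hef hw0 hg hf hgt
      refine .concat_flipDownAt hw0 (flipReach_of_delta_eq hF hef hw0 hf hU.inHF_right ?_) hU
      rw [delta_comm]
      linarith [hU.delta_flipUpAt hF hw0 hf hUlt, delta_comm (F := F) (ef := ef) (f := f) (g := g)]

lemma FlipSeq.delta_le (hg : InHF F ef w0 g) (hseq : FlipSeq F ef w0 φ s n) {i j : ℕ}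
    (hij : i ≤ j) (hjn : j ≤ n) : Delta F ef (φ i) g ≤ Delta F ef (φ j) g + 4 * (j - i : ℤ) := by
  induction j, hij using Nat.le_induction with
  | base => simp
  | succ j hij ih =>
    have := (hseq.isFlip (by omega : j < n)).delta_le hg
    push_cast
    linarith [ih (by omega)]

lemma FlipReach.delta_le (hg : InHF F ef w0 g) (hr : FlipReach F ef w0 n f g) :
    Delta F ef f g ≤ 4 * n := by
  obtain ⟨φ, s, rfl, hn, hseq⟩ := hr
  simpa [delta_eq_zero_of_eqOn hn] using hseq.delta_le hg (Nat.zero_le n) le_rfl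

lemma FlipSeq.delta_eq_add_four (hg : InHF F ef w0 g) (hseq : FlipSeq F ef w0 φ s n)
    (hend : Set.EqOn (φ n) g (VF F)) (htot : Delta F ef (φ 0) g = 4 * n) {i : ℕ} (hi : i < n) :
    Delta F ef (φ i) g = Delta F ef (φ (i + 1)) g + 4 := by
  have h₁ := hseq.delta_le hg (Nat.zero_le i) hi.le
  have h₂ := hseq.delta_le hg (Nat.succ_le_of_lt hi) le_rfl
  rw [delta_eq_zero_of_eqOn hend] at h₂
  push_cast at h₁ h₂
  linarith [(hseq.isFlip hi).delta_le hg]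

lemma FlipSeq.exists_eq_of_ne (hseq : FlipSeq F ef w0 φ s n) (hS : IsForcedComponent F ef S)
    {v : Vtx} (hv : v ∈ S) (hne : φ 0 v ≠ φ n v) : ∃ i < n, s i = S := by
  obtain ⟨i, hi, hchange⟩ : ∃ i < n, φ i v ≠ φ (i + 1) v := by
    by_contra! hc
    refine hne ((?_ : ∀ j ≤ n, φ 0 v = φ j v) n le_rfl)
    intro j hj
    induction j with
    | zero => rfl
    | succ j ih => exact (ih (by omega)).trans (hc j (by omega))
  have hvs : v ∈ s i := by_contra fun h => hchange ((hseq.isFlip hi).eq_of_notMem h).symm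
  exact ⟨i, hi, (hseq.isFlip hi).isForcedComponent.eq_of_mem hS hvs hv⟩

/-- Along such a sequence `|φ j - g|` never increases and drops by `4` on each flipped
component. -/
lemma FlipSeq.exists_ne_of_delta_eq (hg : InHF F ef w0 g) (hseq : FlipSeq F ef w0 φ s n)
    (hend : Set.EqOn (φ n) g (VF F)) (htot : Delta F ef (φ 0) g = 4 * n) {i : ℕ} (hi : i < n) :
    ∃ v ∈ s i, φ 0 v ≠ g v := by
  obtain ⟨u, hu⟩ := (hseq.isFlip hi).isForcedComponent.nonempty
  refine ⟨u, hu, fun heq => ?_⟩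
  have hanti : ∀ j ≤ n, |φ j u - g u| ≤ |φ 0 u - g u| := by
    intro j hj
    induction j with
    | zero => exact le_rfl
    | succ j ih => exact ((hseq.isFlip (by omega : j < n)).abs_sub_le hg
        (hseq.delta_eq_add_four hg hend htot (by omega)) u).trans (ih (by omega))
  have := (hseq.isFlip hi).abs_sub_add_four hg (hseq.delta_eq_add_four hg hend htot hi) hu
  rw [heq, sub_self, abs_zero] at hanti
  linarith [hanti i hi.le, abs_nonneg (φ (i + 1) u - g u)]

end FlipSequences

/-- the minimal number of allowed flips needed to pass from `h`
to `h'` is `Δ(h,h')/4`, and in any minimal sequence the flipped forced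
components are exactly those on which `h` and `h'` differ. -/
theorem min_flip_distance (F : Finset Vtx) (hF : IsFigure F)
    (ef : GArc → ℤ) (hef : IsEquilibrium F ef)
    (w0 : Vtx) (hw0 : OnOuterBoundary F w0)
    (h h' : Vtx → ℤ) (hh : InHF F ef w0 h) (hh' : InHF F ef w0 h') :
    ∃ n₀ : ℕ, 4 * (n₀ : ℤ) = Delta F ef h h' ∧
      IsLeast {n : ℕ | ∃ (f : ℕ → Vtx → ℤ) (s : ℕ → Set Vtx),
        f 0 = h ∧ (∀ v ∈ VF F, f n v = h' v) ∧ FlipSeq F ef w0 f s n} n₀ ∧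
      (∀ (f : ℕ → Vtx → ℤ) (s : ℕ → Set Vtx),
        f 0 = h → (∀ v ∈ VF F, f n₀ v = h' v) → FlipSeq F ef w0 f s n₀ →
        ∀ S : Set Vtx, (∃ i < n₀, s i = S) ↔
          (IsForcedComponent F ef S ∧ ∃ v ∈ S, h v ≠ h' v)) := by
  obtain ⟨k, hk⟩ := four_dvd_delta hF hw0.1 hh hh'
  lift k to ℕ using by linarith [delta_nonneg (F := F) (ef := ef) (f := h) (g := h')]
  refine ⟨k, hk.symm, ⟨flipReach_of_delta_eq hF hef.1 hw0.1 hh hh' hk, fun n hn => ?_⟩,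
    fun f s h0 hend hseq S => ⟨?_, ?_⟩⟩
  · have : (4 * k : ℤ) ≤ 4 * n := hk ▸ FlipReach.delta_le hh' hn
    omega
  · rintro ⟨i, hi, rfl⟩
    exact ⟨(hseq.isFlip hi).isForcedComponent,
      h0 ▸ hseq.exists_ne_of_delta_eq hh' hend (h0 ▸ hk) hi⟩
  · rintro ⟨hS, v, hv, hne⟩
    exact hseq.exists_eq_of_ne hS hv (by rwa [h0, hend v (hS.subset_VF hv)])
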